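/- Let N ≥ 1, let φ : ℝ^N → ℝ^N be a continuously differentiable bijection whose inverse φ⁻¹ is also continuously differentiable, and let ψ : ℝ^N → ℝ^N be continuously differentiable. Then for every point x, the function t ↦ det D(φ + tψ)(x) is differentiable at t = 0 and its derivative d there satisfies d · det D(φ⁻¹)(φ(x)) = div(ψ ∘ φ⁻¹)(φ(x)), where div f(y) = Σ_i ∂_i f_i(y) denotes the divergence and D denotes the Jacobian matrix. -/

import Mathlib

/-- Jacobian matrix of f at x: entries (Df(x))_{ij} = ∂_j f_i(x). -/
noncomputable def jac {N : ℕ}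
    (f : EuclideanSpace ℝ (Fin N) → EuclideanSpace ℝ (Fin N))
    (x : EuclideanSpace ℝ (Fin N)) : Matrix (Fin N) (Fin N) ℝ :=
  Matrix.of fun i j => fderiv ℝ f x (EuclideanSpace.single j 1) i

/-- Divergence of a vector field: div f(x) = Σ_i ∂_i f_i(x). -/
noncomputable def diverg {N : ℕ}
    (f : EuclideanSpace ℝ (Fin N) → EuclideanSpace ℝ (Fin N))
    (x : EuclideanSpace ℝ (Fin N)) : ℝ :=
  ∑ i, fderiv ℝ f x (EuclideanSpace.single i 1) i

/-!
With `A = Dφ(x)` and `B = Dψ(x)` the curve in question is `t ↦ det (A + t B)`, whose derivative at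
`0` is `det A · tr (A⁻¹ B)` by Jacobi's formula. The chain rule applied to `φ⁻¹ ∘ φ = id` gives
`Dφ⁻¹(φ x) = A⁻¹`, hence `D(ψ ∘ φ⁻¹)(φ x) = B A⁻¹`, whose trace is `tr (A⁻¹ B)`.
-/

namespace Matrix

variable {𝕜 : Type*} [NontriviallyNormedField 𝕜] {n : Type*} [Fintype n] [DecidableEq n]

theorem hasDerivAt_det_one_add_smul (M : Matrix n n 𝕜) :
    HasDerivAt (fun t : 𝕜 => (1 + t • M).det) M.trace 0 := by
  set P := det (1 + (Polynomial.X : Polynomial 𝕜) • M.map Polynomial.C)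
  have hP : (fun t : 𝕜 => (1 + t • M).det) = fun t => P.eval t := by
    ext t
    simp [P, eval_det, ← smul_eq_mul_diagonal]
  rw [hP, ← derivative_det_one_add_X_smul M]
  exact P.hasDerivAt 0

theorem hasDerivAt_det_add_smul {A : Matrix n n 𝕜} (hA : IsUnit A.det) (B : Matrix n n 𝕜) :
    HasDerivAt (fun t : 𝕜 => (A + t • B).det) (A.det * (A⁻¹ * B).trace) 0 := by
  have hfactor : ∀ t : 𝕜, A + t • B = A * (1 + t • (A⁻¹ * B)) := fun t => by
    rw [Matrix.mul_add, Matrix.mul_one, Matrix.mul_smul, mul_nonsing_inv_cancel_left _ _ hA]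
  simp only [hfactor, det_mul]
  exact (hasDerivAt_det_one_add_smul _).const_mul A.det

end Matrix

section Jacobian

variable {N : ℕ}

local notation "E" => EuclideanSpace ℝ (Fin N)

theorem jac_eq_toMatrix (f : E → E) (x : E) :
    jac f x = LinearMap.toMatrix (EuclideanSpace.basisFun (Fin N) ℝ).toBasis
      (EuclideanSpace.basisFun (Fin N) ℝ).toBasis (fderiv ℝ f x) := by
  ext i j
  simp [jac, LinearMap.toMatrix_apply]

theorem jac_comp {f g : E → E} {x : E} (hf : DifferentiableAt ℝ f (g x))
    (hg : DifferentiableAt ℝ g x) :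
    jac (fun y => f (g y)) x = jac f (g x) * jac g x := by
  rw [jac_eq_toMatrix, fderiv_fun_comp x hf hg, ContinuousLinearMap.toLinearMap_comp,
    LinearMap.toMatrix_comp _ (EuclideanSpace.basisFun (Fin N) ℝ).toBasis, ← jac_eq_toMatrix,
    ← jac_eq_toMatrix]

theorem jac_id (x : E) : jac (fun y => y) x = 1 := by
  rw [jac_eq_toMatrix, fderiv_fun_id, ContinuousLinearMap.coe_id, LinearMap.toMatrix_id]

theorem jac_add_smul {f g : E → E} {x : E} (hf : DifferentiableAt ℝ f x)
    (hg : DifferentiableAt ℝ g x) (t : ℝ) :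
    jac (fun y => f y + t • g y) x = jac f x + t • jac g x := by
  rw [jac_eq_toMatrix, (hf.hasFDerivAt.fun_add (hg.hasFDerivAt.fun_const_smul t)).fderiv,
    ContinuousLinearMap.toLinearMap_add, ContinuousLinearMap.toLinearMap_smul, map_add, map_smul,
    ← jac_eq_toMatrix, ← jac_eq_toMatrix]

theorem diverg_eq_trace_jac (f : E → E) (x : E) : diverg f x = (jac f x).trace := rfl

end Jacobian

theorem deriv_det_jacobian_eq_divergence_general
    {N : ℕ}
    (φ φinv ψ : EuclideanSpace ℝ (Fin N) → EuclideanSpace ℝ (Fin N))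
    (hφ : ContDiff ℝ 1 φ) (hφinv : ContDiff ℝ 1 φinv) (hψ : ContDiff ℝ 1 ψ)
    (hleft : Function.LeftInverse φinv φ)
    (x : EuclideanSpace ℝ (Fin N)) :
    ∃ d : ℝ,
      HasDerivAt (fun t : ℝ => (jac (fun y => φ y + t • ψ y) x).det) d 0 ∧
        d * (jac φinv (φ x)).det = diverg (fun y => ψ (φinv y)) (φ x) := by
  have hφ' := hφ.differentiable one_ne_zero
  have hφinv' := hφinv.differentiable one_ne_zero
  have hψ' := hψ.differentiable one_ne_zero
  set A := jac φ x
  have hCA : jac φinv (φ x) * A = 1 := by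
    rw [← jac_comp (hφinv' _) (hφ' x), funext hleft, jac_id]
  have hA : IsUnit A.det := Matrix.isUnit_det_of_left_inverse hCA
  have hinv : A⁻¹ = jac φinv (φ x) := Matrix.inv_eq_left_inv hCA
  refine ⟨A.det * (A⁻¹ * jac ψ x).trace, ?_, ?_⟩
  · simp_rw [jac_add_smul (hφ' x) (hψ' x)]
    exact Matrix.hasDerivAt_det_add_smul hA _
  · rw [diverg_eq_trace_jac, jac_comp (hψ' _) (hφinv' _), hleft x, ← hinv, mul_right_comm,
      ← Matrix.det_mul, Matrix.mul_nonsing_inv _ hA, Matrix.det_one, one_mul,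
      Matrix.trace_mul_comm]

/-- d/dt|_{t=0} det D(φ+tψ)(x) · det D(φ⁻¹)(φ(x)) = div(ψ∘φ⁻¹)(φ(x)). -/
theorem deriv_det_jacobian_eq_divergence
    {N : ℕ} (hN : 1 ≤ N)
    (φ φinv ψ : EuclideanSpace ℝ (Fin N) → EuclideanSpace ℝ (Fin N))
    (hφ : ContDiff ℝ 1 φ) (hφinv : ContDiff ℝ 1 φinv) (hψ : ContDiff ℝ 1 ψ)
    (hleft : Function.LeftInverse φinv φ) (hright : Function.RightInverse φinv φ)
    (x : EuclideanSpace ℝ (Fin N)) :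
    ∃ d : ℝ,
      HasDerivAt (fun t : ℝ => (jac (fun y => φ y + t • ψ y) x).det) d 0 ∧
        d * (jac φinv (φ x)).det = diverg (fun y => ψ (φinv y)) (φ x) :=
  deriv_det_jacobian_eq_divergence_general φ φinv ψ hφ hφinv hψ hleft x
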